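/- arXiv:1710.07889 — 2 statements merged into one kernel-verified Lean document; each statement's English description precedes it below -/
import Mathlib

section
/- Let m₁, m₂ be integers, let n be a nonnegative integer with n < m₂ and n ≥ max(m₁, m₂ − m₁), and let α, γ be real numbers that are not integers. Then ( (1−γ)_{m₂} (γ−α)_{m₁−m₂} (α−m₁)_n / ( (γ−m₂)_n · n! ) ) · ₃F₂(−n, 1−α, 1−γ+m₂−n; 2−γ, 1−α+m₁−n; 1) = 0. -/
open Finset

/-- Pochhammer symbol `(a)ₙ = a(a+1)⋯(a+n-1)` for natural `n`. -/
noncomputable def poch (a : ℝ) (n : ℕ) : ℝ := Polynomial.eval a (ascPochhammer ℝ n)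

/-- Pochhammer symbol `(a)ₖ` for integer `k`: for `k ≥ 0` the ascending product,
and `(a)₋ₖ = (-1)ᵏ/(1-a)ₖ` for `k ≥ 0`. -/
noncomputable def pochZ (a : ℝ) (k : ℤ) : ℝ :=
  if 0 ≤ k then poch a k.toNat else (-1) ^ (-k).toNat / poch (1 - a) (-k).toNat

/-- The (generally non-terminating) Clausen series `₃F₂(a,b,c;d,e;1)`. -/
noncomputable def F32 (a b c d e : ℝ) : ℝ :=
  ∑' n : ℕ, poch a n * poch b n * poch c n / (poch d n * poch e n * n.factorial)

/-- A terminating `₃F₂(a,b,c;d,e;1)` summed over `k = 0, …, N`. -/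
noncomputable def F32sum (N : ℕ) (a b c d e : ℝ) : ℝ :=
  ∑ k ∈ Finset.range (N + 1),
    poch a k * poch b k * poch c k / (poch d k * poch e k * k.factorial)

/-- The Kummer confluent hypergeometric function `₁F₁(a;b;x)`. -/
noncomputable def F11 (a b x : ℝ) : ℝ :=
  ∑' n : ℕ, poch a n * x ^ n / (poch b n * n.factorial)


section Aux
open Polynomial

lemma poch_eq_prod (a : ℝ) (m : ℕ) : poch a m = ∏ j ∈ range m, (a + j) := by
  induction m with
  | zero => simp [poch]
  | succ m ih => rw [poch, ascPochhammer_succ_eval, ← poch, ih, prod_range_succ]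

lemma poch_add (a : ℝ) (m k : ℕ) : poch a (m + k) = poch a m * poch (a + m) k := by
  simp only [poch_eq_prod, prod_range_add]
  congr 1
  refine prod_congr rfl fun j _ => ?_
  push_cast; ring

lemma poch_neg_nat (n k : ℕ) : poch (-(n:ℝ)) k = (-1)^k * (n.descFactorial k : ℝ) := by
  rw [poch, ascPochhammer_eval_neg_eq_descPochhammer, ← descPochhammer_eval_eq_descFactorial]

lemma poch_ne_zero {a : ℝ} (h : ∀ j : ℕ, a + j ≠ 0) (m : ℕ) : poch a m ≠ 0 := by
  rw [poch_eq_prod]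
  exact prod_ne_zero_iff.mpr fun j _ => h j

lemma alt_sum_poly : ∀ (n : ℕ) (P : Polynomial ℝ), P.degree < n →
    ∑ k ∈ range (n+1), (-1:ℝ)^k * (n.choose k) * P.eval (k:ℝ) = 0 := by
  intro n
  induction n with
  | zero =>
    intro P hP
    have : P = 0 := by
      rw [← Polynomial.degree_eq_bot]
      exact Nat.WithBot.lt_zero_iff.mp (by exact_mod_cast hP)
    simp [this]
  | succ n ih =>
    intro P hP
    by_cases hP0 : P = 0
    · simp [hP0]
    have hq1 : (X + 1 : Polynomial ℝ).natDegree = 1 := by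
      simpa using Polynomial.natDegree_X_add_C (1:ℝ)
    have hlc : (P.comp (X + 1)).leadingCoeff = P.leadingCoeff := by
      rw [Polynomial.leadingCoeff_comp (by rw [hq1]; norm_num)]
      have : (X + 1 : Polynomial ℝ).leadingCoeff = 1 := by
        simpa using Polynomial.leadingCoeff_X_add_C (1:ℝ)
      rw [this, one_pow, mul_one]
    have hcomp0 : P.comp (X + 1) ≠ 0 := by
      intro h
      apply hP0
      rw [← Polynomial.leadingCoeff_eq_zero, ← hlc, h, Polynomial.leadingCoeff_zero]
    have hdeg : (P.comp (X + 1)).degree = P.degree := by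
      rw [Polynomial.degree_eq_natDegree hcomp0, Polynomial.degree_eq_natDegree hP0,
        Polynomial.natDegree_comp, hq1, mul_one]
    set Q : Polynomial ℝ := P - P.comp (X + 1) with hQdef
    have hPle : P.degree ≤ (n : WithBot ℕ) := by
      have := hP
      rw [Polynomial.degree_eq_natDegree hP0] at this ⊢
      exact_mod_cast Nat.lt_succ_iff.mp (by exact_mod_cast this)
    have hQdeg : Q.degree < (n : WithBot ℕ) :=
      lt_of_lt_of_le (Polynomial.degree_sub_lt hdeg.symm hP0 hlc.symm) hPle
    have key := ih Q hQdeg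
    have hQeval : ∀ x : ℝ, Q.eval x = P.eval x - P.eval (x + 1) := by
      intro x
      simp [hQdef, Polynomial.eval_comp]
    -- Let A, B over range (n+1)
    have hA : ∑ k ∈ range (n+1), (-1:ℝ)^k * (n.choose k) * P.eval (k:ℝ)
        = - (∑ k ∈ range n, (-1:ℝ)^k * (n.choose (k+1)) * P.eval ((k:ℝ)+1)) + P.eval 0 := by
      rw [Finset.sum_range_succ']
      simp only [pow_succ, Nat.choose_zero_right]
      rw [← Finset.sum_neg_distrib]
      congr 1
      · refine Finset.sum_congr rfl fun k _ => ?_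
        push_cast; ring
      · simp
    have hC : ∑ k ∈ range (n+1), (-1:ℝ)^k * (n.choose (k+1)) * P.eval ((k:ℝ)+1)
        = ∑ k ∈ range n, (-1:ℝ)^k * (n.choose (k+1)) * P.eval ((k:ℝ)+1) := by
      rw [Finset.sum_range_succ, Nat.choose_succ_self]
      simp
    -- main computation
    rw [Finset.sum_range_succ']
    push_cast
    have hsplit : ∀ k, ((-1:ℝ))^(k+1) * (((n+1).choose (k+1) : ℕ) : ℝ) * P.eval ((k:ℝ)+1)
        = -((-1:ℝ)^k * (n.choose k) * P.eval ((k:ℝ)+1)) - (-1:ℝ)^k * (n.choose (k+1)) * P.eval ((k:ℝ)+1) := by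
      intro k
      rw [Nat.choose_succ_succ]
      push_cast
      ring
    calc ∑ k ∈ range (n+1), (-1:ℝ)^(k+1) * (((n+1).choose (k+1) : ℕ) : ℝ) * P.eval ((k:ℝ)+1)
          + (-1:ℝ)^0 * (((n+1).choose 0 : ℕ) : ℝ) * P.eval (0:ℝ)
        = - (∑ k ∈ range (n+1), (-1:ℝ)^k * (n.choose k) * P.eval ((k:ℝ)+1))
          - (∑ k ∈ range (n+1), (-1:ℝ)^k * (n.choose (k+1)) * P.eval ((k:ℝ)+1)) + P.eval 0 := by
          simp only [hsplit]
          rw [Finset.sum_sub_distrib, Finset.sum_neg_distrib]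
          simp [Nat.choose_zero_right]
      _ = - (∑ k ∈ range (n+1), (-1:ℝ)^k * (n.choose k) * P.eval ((k:ℝ)+1))
          + ∑ k ∈ range (n+1), (-1:ℝ)^k * (n.choose k) * P.eval (k:ℝ) := by
          rw [hC, hA]; ring
      _ = ∑ k ∈ range (n+1), (-1:ℝ)^k * (n.choose k) * Q.eval (k:ℝ) := by
          rw [← Finset.sum_neg_distrib, ← Finset.sum_add_distrib]
          refine Finset.sum_congr rfl fun k _ => ?_
          rw [hQeval]
          ring
      _ = 0 := key

lemma F32sum_inner_vanish (n p q : ℕ) (hpq : p + q < n) (d e : ℝ)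
    (hd : ∀ j : ℕ, d + j ≠ 0) (he : ∀ j : ℕ, e + j ≠ 0) :
    ∑ k ∈ range (n + 1),
      poch (-(n:ℝ)) k * poch (e + p) k * poch (d + q) k /
        (poch d k * poch e k * k.factorial) = 0 := by
  set P : Polynomial ℝ :=
    (∏ j ∈ range p, (Polynomial.X + Polynomial.C (e + j))) *
      (∏ j ∈ range q, (Polynomial.X + Polynomial.C (d + j))) with hP
  have hPdeg : P.degree < (n : WithBot ℕ) := by
    have hsum : ∀ (m : ℕ) (c : ℝ), (∏ j ∈ range m, (Polynomial.X + Polynomial.C (c + (j:ℝ)))).degree ≤ (m : WithBot ℕ) := by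
      intro m c
      refine le_trans (Polynomial.degree_prod_le _ _) (le_trans (Finset.sum_le_sum
        (g := fun _ => (1 : WithBot ℕ))
        (fun j _ => le_of_eq (Polynomial.degree_X_add_C (c + (j:ℝ))))) ?_)
      simp
    have h1 := hsum p e
    have h2 := hsum q d
    calc P.degree ≤ _ + _ := Polynomial.degree_mul_le _ _
      _ ≤ (p : WithBot ℕ) + (q : WithBot ℕ) := add_le_add h1 h2
      _ = ((p + q : ℕ) : WithBot ℕ) := by push_cast; rfl
      _ < (n : WithBot ℕ) := by exact_mod_cast hpq
  have hPeval : ∀ k : ℕ, P.eval (k:ℝ) = poch (e + k) p * poch (d + k) q := by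
    intro k
    rw [hP, Polynomial.eval_mul, Polynomial.eval_prod, Polynomial.eval_prod,
      poch_eq_prod, poch_eq_prod]
    congr 1
    · refine Finset.prod_congr rfl fun j _ => ?_
      simp only [Polynomial.eval_add, Polynomial.eval_X, Polynomial.eval_C]
      ring
    · refine Finset.prod_congr rfl fun j _ => ?_
      simp only [Polynomial.eval_add, Polynomial.eval_X, Polynomial.eval_C]
      ring
  have key := alt_sum_poly n P hPdeg
  have hterm : ∀ k ∈ range (n + 1),
      poch (-(n:ℝ)) k * poch (e + p) k * poch (d + q) k /
        (poch d k * poch e k * k.factorial)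
      = ((-1:ℝ)^k * (n.choose k) * P.eval (k:ℝ)) / (poch e p * poch d q) := by
    intro k hk
    have hk' : k ≤ n := Nat.lt_succ_iff.mp (Finset.mem_range.mp hk)
    have hep : poch (e + p) k = poch e k * poch (e + k) p / poch e p := by
      have h1 : poch e (p + k) = poch e p * poch (e + p) k := poch_add e p k
      have h2 : poch e (p + k) = poch e k * poch (e + k) p := by
        rw [add_comm p k]; exact poch_add e k p
      rw [eq_div_iff (poch_ne_zero he p), mul_comm, ← h1, h2]
    have hdq : poch (d + q) k = poch d k * poch (d + k) q / poch d q := by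
      have h1 : poch d (q + k) = poch d q * poch (d + q) k := poch_add d q k
      have h2 : poch d (q + k) = poch d k * poch (d + k) q := by
        rw [add_comm q k]; exact poch_add d k q
      rw [eq_div_iff (poch_ne_zero hd q), mul_comm, ← h1, h2]
    have hneg : poch (-(n:ℝ)) k = (-1:ℝ)^k * (n.choose k) * k.factorial := by
      rw [poch_neg_nat, Nat.descFactorial_eq_factorial_mul_choose]
      push_cast
      ring
    rw [hep, hdq, hneg, hPeval k]
    have h1 := poch_ne_zero he p
    have h2 := poch_ne_zero hd q
    have h3 := poch_ne_zero he k
    have h4 := poch_ne_zero hd k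
    have h5 : (k.factorial : ℝ) ≠ 0 := Nat.cast_ne_zero.mpr k.factorial_ne_zero
    field_simp
  rw [Finset.sum_congr rfl hterm, ← Finset.sum_div, key, zero_div]

end Aux

theorem F32_terminating_vanishes (m₁ m₂ : ℤ) (n : ℕ)
    (hn2 : (n : ℤ) < m₂) (hn : max m₁ (m₂ - m₁) ≤ (n : ℤ))
    (α γ : ℝ) (hα : ∀ k : ℤ, α ≠ (k : ℝ)) (hγ : ∀ k : ℤ, γ ≠ (k : ℝ)) :
    pochZ (1 - γ) m₂ * pochZ (γ - α) (m₁ - m₂) * poch (α - (m₁ : ℝ)) n /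
        (poch (γ - (m₂ : ℝ)) n * n.factorial) *
      F32sum n (-(n : ℝ)) (1 - α) (1 - γ + (m₂ : ℝ) - n) (2 - γ) (1 - α + (m₁ : ℝ) - n)
      = 0 := by
  have hm1 : m₁ ≤ (n : ℤ) := le_trans (le_max_left _ _) hn
  have hm2 : m₂ - m₁ ≤ (n : ℤ) := le_trans (le_max_right _ _) hn
  obtain ⟨p, hp⟩ := Int.eq_ofNat_of_zero_le (a := (n : ℤ) - m₁) (by omega)
  obtain ⟨q, hq⟩ := Int.eq_ofNat_of_zero_le (a := m₂ - (n : ℤ) - 1) (by omega)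
  have hpq : p + q < n := by exact_mod_cast show ((p:ℤ) + q < (n:ℤ)) by omega
  set d : ℝ := 2 - γ with hddef
  set e : ℝ := 1 - α + (m₁ : ℝ) - (n : ℝ) with hedef
  have hpr : (n : ℝ) - (m₁ : ℝ) = (p : ℝ) := by exact_mod_cast hp
  have hqr : (m₂ : ℝ) - (n : ℝ) - 1 = (q : ℝ) := by exact_mod_cast hq
  have hd : ∀ j : ℕ, d + (j : ℝ) ≠ 0 := by
    intro j hj
    rw [hddef] at hj
    apply hγ (2 + (j : ℤ))
    push_cast
    linarith
  have he : ∀ j : ℕ, e + (j : ℝ) ≠ 0 := by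
    intro j hj
    rw [hedef] at hj
    apply hα (1 + m₁ - (n : ℤ) + (j : ℤ))
    push_cast
    linarith
  have hb : (1 : ℝ) - α = e + p := by rw [hedef]; linarith
  have hc : (1 : ℝ) - γ + (m₂ : ℝ) - (n : ℝ) = d + q := by rw [hddef]; linarith
  have hz : F32sum n (-(n : ℝ)) (e + p) (d + q) d e = 0 := by
    unfold F32sum
    exact F32sum_inner_vanish n p q hpq d e hd he
  rw [hb, hc, hz, mul_zero]
end

section
/- Let α, γ be real numbers with γ not an integer. Then for all real t: ( (α−1) t / ( (γ−1)(γ−2) ) ) · ₁F₁(α; γ; t) · ₁F₁(2−α; 3−γ; −t) + ₁F₁(1−α; 2−γ; −t) · ₁F₁(α−1; γ−1; t) = 1. -/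
open Finset

/-! Regard `A = ₁F₁(α; γ; x)`, `D = ₁F₁(α - 1; γ - 1; x)`, `B = ₁F₁(2 - α; 3 - γ; -x)` and
`E = ₁F₁(1 - α; 2 - γ; -x)` as formal power series. The contiguous relations
`x M(a; b)' = (b - 1) (M(a; b - 1) - M(a; b))`, `b (M(a; b) - M(a - 1; b)) = x M(a; b + 1)` and
`M(a; b)' = (a / b) M(a + 1; b + 1)` make the formal derivative of `K x A B + E D` vanish, where
`K = (α - 1) / ((γ - 1) (γ - 2))`, so this series is its constant term `1`. The formal identity
passes to values because evaluation at `t` is an algebra homomorphism on the series converging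
absolutely at `t` (Cauchy products), and the `₁F₁` series converge everywhere by the ratio test. -/

open PowerSeries Filter Topology
open scoped Nat

theorem poch_zero (a : ℝ) : poch a 0 = 1 := by simp [poch]

theorem poch_succ_right (a : ℝ) (n : ℕ) : poch a (n + 1) = poch a n * (a + n) :=
  ascPochhammer_succ_eval n a

theorem poch_succ_left (a : ℝ) (n : ℕ) : poch a (n + 1) = a * poch (a + 1) n := by
  simp [poch, ascPochhammer_succ_left, Polynomial.eval_comp]

theorem poch_ne_zero_s7 {b : ℝ} (hb : ∀ k : ℕ, b + k ≠ 0) (n : ℕ) : poch b n ≠ 0 := by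
  induction n with
  | zero => simp [poch_zero]
  | succ n ih => rw [poch_succ_right]; exact mul_ne_zero ih (hb n)

theorem summable_norm_of_ratio_tendsto_zero {E : Type*} [NormedAddCommGroup E] [NormedSpace ℝ E]
    {f : ℕ → E} {r : ℕ → ℝ} (hf : ∀ n, f (n + 1) = r n • f n) (hr : Tendsto r atTop (𝓝 0)) :
    Summable fun n => ‖f n‖ := by
  refine summable_of_ratio_norm_eventually_le (r := 1 / 2) (by norm_num) ?_
  filter_upwards [hr.norm.eventually (ge_mem_nhds (by norm_num : ‖(0 : ℝ)‖ < 1 / 2))] with n hn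
  rw [norm_norm, norm_norm, hf, norm_smul]
  exact mul_le_mul_of_nonneg_right hn (norm_nonneg _)

namespace PowerSeries

variable {R : Type*} [CommSemiring R]

theorem rescale_C (c r : R) : rescale c (C r) = C r := by
  ext (_ | n) <;> simp [coeff_rescale, coeff_C]

theorem constantCoeff_rescale (c : R) (f : R⟦X⟧) :
    constantCoeff (rescale c f) = constantCoeff f := by
  rw [← coeff_zero_eq_constantCoeff_apply, coeff_rescale, pow_zero, one_mul,
    coeff_zero_eq_constantCoeff_apply]

theorem coeff_X_mul_derivative (f : R⟦X⟧) (n : ℕ) : coeff n (X * d⁄dX R f) = n * coeff n f := by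
  cases n <;> simp [coeff_derivative, mul_comm]

theorem derivative_rescale (c : R) (f : R⟦X⟧) :
    d⁄dX R (rescale c f) = C c * rescale c (d⁄dX R f) := by
  ext n
  simp only [coeff_derivative, coeff_rescale, coeff_C_mul]
  ring

theorem X_mul_derivative_rescale (c : R) (f : R⟦X⟧) :
    X * d⁄dX R (rescale c f) = rescale c (X * d⁄dX R f) := by
  ext n
  simp only [coeff_X_mul_derivative, coeff_rescale]
  ring

theorem coeff_mul_mul_pow (f g : ℝ⟦X⟧) (t : ℝ) (n : ℕ) :
    coeff n (f * g) * t ^ n =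
      ∑ p ∈ antidiagonal n, coeff p.1 f * t ^ p.1 * (coeff p.2 g * t ^ p.2) := by
  rw [coeff_mul, Finset.sum_mul]
  refine Finset.sum_congr rfl fun p hp => ?_
  rw [← mem_antidiagonal.1 hp, pow_add]
  ring

noncomputable def absConvAt (t : ℝ) : Subalgebra ℝ ℝ⟦X⟧ where
  carrier := {f | Summable fun n => ‖coeff n f * t ^ n‖}
  mul_mem' {f g} hf hg := by
    simpa only [Set.mem_ofPred_eq, coeff_mul_mul_pow] using
      summable_norm_sum_mul_antidiagonal_of_summable_norm hf hg
  add_mem' {f g} hf hg := by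
    refine (hf.add hg).of_nonneg_of_le (fun _ => norm_nonneg _) fun n => ?_
    simpa only [map_add, add_mul] using norm_add_le _ _
  algebraMap_mem' r := by
    refine summable_of_ne_finset_zero (s := {0}) fun n hn => ?_
    simp_all [coeff_C]

theorem mem_absConvAt {t : ℝ} {f : ℝ⟦X⟧} :
    f ∈ absConvAt t ↔ Summable fun n => ‖coeff n f * t ^ n‖ := Iff.rfl

noncomputable def evalAt (t : ℝ) : absConvAt t →ₐ[ℝ] ℝ where
  toFun f := ∑' n, coeff n (f : ℝ⟦X⟧) * t ^ n
  map_one' := by simp [coeff_one]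
  map_mul' f g := by
    simp only [Subalgebra.coe_mul, coeff_mul_mul_pow]
    exact (tsum_mul_tsum_eq_tsum_sum_antidiagonal_of_summable_norm f.2 g.2).symm
  map_zero' := by simp
  map_add' f g := by
    simp only [Subalgebra.coe_add, map_add, add_mul]
    exact f.2.of_norm.tsum_add g.2.of_norm
  commutes' r := by simp [coeff_C]

theorem evalAt_apply (t : ℝ) (f : absConvAt t) :
    evalAt t f = ∑' n, coeff n (f : ℝ⟦X⟧) * t ^ n := rfl

theorem X_mem_absConvAt (t : ℝ) : X ∈ absConvAt t :=
  summable_of_ne_finset_zero (s := {1}) fun n hn => by simp_all [coeff_X]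

theorem evalAt_X (t : ℝ) : evalAt t ⟨X, X_mem_absConvAt t⟩ = t := by
  simp [evalAt_apply, coeff_X]

theorem rescale_mem_absConvAt {c t : ℝ} {f : ℝ⟦X⟧} (hf : f ∈ absConvAt (c * t)) :
    rescale c f ∈ absConvAt t := by
  rw [mem_absConvAt] at hf ⊢
  simpa only [coeff_rescale, mul_pow, mul_left_comm, mul_assoc] using hf

end PowerSeries

noncomputable def kummerSeries (a b : ℝ) : ℝ⟦X⟧ := mk fun n => poch a n / (poch b n * n !)

theorem coeff_kummerSeries (a b : ℝ) (n : ℕ) :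
    coeff n (kummerSeries a b) = poch a n / (poch b n * n !) :=
  coeff_mk _ _

theorem constantCoeff_kummerSeries (a b : ℝ) : constantCoeff (kummerSeries a b) = 1 := by
  simp [← coeff_zero_eq_constantCoeff_apply, coeff_kummerSeries, poch_zero]

section Kummer

variable {a b : ℝ}

theorem add_one_add_natCast_ne_zero (hb : ∀ k : ℕ, b + k ≠ 0) (k : ℕ) : b + 1 + k ≠ 0 := by
  convert hb (k + 1) using 1
  push_cast
  ring

theorem kummerSeries_mem_absConvAt (hb : ∀ k : ℕ, b + k ≠ 0) (t : ℝ) :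
    kummerSeries a b ∈ absConvAt t := by
  refine summable_norm_of_ratio_tendsto_zero
    (r := fun n => (a + 1 * n) / (b + 1 * n) * (t * (1 / (n + 1)))) (fun n => ?_) ?_
  · have := poch_ne_zero_s7 hb n
    have := hb n
    simp only [coeff_kummerSeries, poch_succ_right, Nat.factorial_succ, smul_eq_mul]
    push_cast
    field_simp
    ring
  · simpa using (tendsto_add_mul_div_add_mul_atTop_nhds a b 1 one_ne_zero).mul
      (tendsto_one_div_add_atTop_nhds_zero_nat.const_mul t)

theorem evalAt_kummerSeries {t : ℝ} (h : kummerSeries a b ∈ absConvAt t) :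
    evalAt t ⟨kummerSeries a b, h⟩ = F11 a b t :=
  tsum_congr fun n => by rw [coeff_kummerSeries]; ring

theorem evalAt_rescale_kummerSeries {c t : ℝ} (h : rescale c (kummerSeries a b) ∈ absConvAt t) :
    evalAt t ⟨rescale c (kummerSeries a b), h⟩ = F11 a b (c * t) :=
  tsum_congr fun n => by rw [coeff_rescale, coeff_kummerSeries, mul_pow]; ring

theorem X_mul_derivative_kummerSeries (hb : ∀ k : ℕ, b - 1 + k ≠ 0) :
    X * d⁄dX ℝ (kummerSeries a b) = C (b - 1) * (kummerSeries a (b - 1) - kummerSeries a b) := by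
  ext n
  have := poch_ne_zero_s7 hb n
  have := poch_ne_zero_s7 (add_one_add_natCast_ne_zero hb) n
  have hshift : poch (b - 1) n * (b - 1 + n) = (b - 1) * poch b n := by
    rw [← poch_succ_right, poch_succ_left, sub_add_cancel]
  rw [coeff_X_mul_derivative, coeff_C_mul, map_sub]
  simp only [coeff_kummerSeries, sub_add_cancel] at *
  field_simp
  linear_combination poch a n * hshift

theorem kummerSeries_sub_kummerSeries_sub_one (hb : ∀ k : ℕ, b + k ≠ 0) :
    C b * (kummerSeries a b - kummerSeries (a - 1) b) = X * kummerSeries a (b + 1) := by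
  ext (_ | n)
  · simp [constantCoeff_kummerSeries]
  have := poch_ne_zero_s7 (add_one_add_natCast_ne_zero hb) n
  have : b ≠ 0 := by simpa using hb 0
  simp only [coeff_C_mul, map_sub, coeff_kummerSeries, coeff_succ_X_mul, Nat.factorial_succ]
  rw [poch_succ_right a, poch_succ_left (a - 1), poch_succ_left b, sub_add_cancel]
  push_cast
  field_simp
  ring

theorem derivative_kummerSeries (hb : ∀ k : ℕ, b + k ≠ 0) :
    d⁄dX ℝ (kummerSeries a b) = C (a / b) * kummerSeries (a + 1) (b + 1) := by
  ext n
  have := poch_ne_zero_s7 (add_one_add_natCast_ne_zero hb) n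
  have : b ≠ 0 := by simpa using hb 0
  simp only [coeff_derivative, coeff_C_mul, coeff_kummerSeries, Nat.factorial_succ,
    poch_succ_left]
  push_cast
  field_simp

end Kummer

theorem kummerSeries_wronskian {α γ : ℝ} (hγ₁ : ∀ k : ℕ, γ - 1 + k ≠ 0)
    (hγ₂ : ∀ k : ℕ, 2 - γ + k ≠ 0) :
    ((α - 1) / ((γ - 1) * (γ - 2))) •
        (X * kummerSeries α γ * rescale (-1) (kummerSeries (2 - α) (3 - γ))) +
      rescale (-1) (kummerSeries (1 - α) (2 - γ)) * kummerSeries (α - 1) (γ - 1) = 1 := by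
  set A := kummerSeries α γ
  set A' := kummerSeries α (γ - 1)
  set D := kummerSeries (α - 1) (γ - 1)
  set B := rescale (-1) (kummerSeries (2 - α) (3 - γ))
  set B' := rescale (-1) (kummerSeries (2 - α) (2 - γ))
  set E := rescale (-1) (kummerSeries (1 - α) (2 - γ))
  set g := (α - 1) / ((γ - 1) * (2 - γ)) with hg
  have hu : γ - 1 ≠ 0 := by simpa using hγ₁ 0
  have hv : 2 - γ ≠ 0 := by simpa using hγ₂ 0
  have hA : X * d⁄dX ℝ A = C (γ - 1) * (A' - A) := X_mul_derivative_kummerSeries hγ₁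
  have hB : X * d⁄dX ℝ B = C (2 - γ) * (B' - B) := by
    have h3 : (3 : ℝ) - γ - 1 = 2 - γ := by ring
    rw [X_mul_derivative_rescale, X_mul_derivative_kummerSeries (by rwa [h3]), h3, map_mul,
      rescale_C, map_sub (rescale (-1 : ℝ))]
  have hAD : C (γ - 1) * (A' - D) = X * A := by
    simpa using kummerSeries_sub_kummerSeries_sub_one (a := α) hγ₁
  have hEB : C (2 - γ) * (E - B') = X * B := by
    have := congrArg (rescale (-1)) (kummerSeries_sub_kummerSeries_sub_one (a := 2 - α) hγ₂)
    rw [map_mul, rescale_C, map_sub (rescale (-1 : ℝ)), map_mul, rescale_neg_one_X,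
      show 2 - α - 1 = 1 - α by ring, show 2 - γ + 1 = 3 - γ by ring] at this
    linear_combination -this
  have hE : d⁄dX ℝ E = C (g * (γ - 1)) * B := by
    rw [derivative_rescale, derivative_kummerSeries hγ₂, map_mul, rescale_C,
      show 1 - α + 1 = 2 - α by ring, show 2 - γ + 1 = 3 - γ by ring, ← mul_assoc, ← map_mul]
    congr 2
    rw [hg]
    field_simp
    ring
  have hD : d⁄dX ℝ D = C (g * (2 - γ)) * A := by
    rw [derivative_kummerSeries hγ₁, sub_add_cancel, sub_add_cancel]
    congr 2
    rw [hg]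
    field_simp
  have hK : (α - 1) / ((γ - 1) * (γ - 2)) = -g := by
    rw [show γ - 2 = -(2 - γ) by ring, mul_neg, div_neg]
  have hsum : C (γ - 1) + C (2 - γ) = (1 : ℝ⟦X⟧) := by
    rw [← map_add, sub_add_sub_cancel', show (2 : ℝ) - 1 = 1 by norm_num, map_one]
  refine derivative.ext ?_ ?_
  · rw [hK, smul_eq_C_mul, derivative_one]
    simp only [map_add, Derivation.leibniz, smul_eq_mul, derivative_C, derivative_X, map_mul,
      map_neg, hE, hD]
    linear_combination (-C g * B) * hA + (-C g * A) * hB + (C g * A) * hEB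
      + (-C g * B) * hAD + (C g * A * B) * hsum
  · simp [A, D, E, smul_eq_C_mul, constantCoeff_rescale, constantCoeff_kummerSeries]

theorem Kummer_example1 (α γ : ℝ) (hγ : ∀ k : ℤ, γ ≠ (k : ℝ)) (t : ℝ) :
    (α - 1) * t / ((γ - 1) * (γ - 2)) * F11 α γ t * F11 (2 - α) (3 - γ) (-t) +
      F11 (1 - α) (2 - γ) (-t) * F11 (α - 1) (γ - 1) t = 1 := by
  have hγ₁ : ∀ k : ℕ, γ - 1 + k ≠ 0 := fun k h => hγ (1 - k) (by push_cast; linarith)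
  have hγ₂ : ∀ k : ℕ, 2 - γ + k ≠ 0 := fun k h => hγ (2 + k) (by push_cast; linarith)
  have hγ₀ : ∀ k : ℕ, γ + k ≠ 0 := by simpa using add_one_add_natCast_ne_zero hγ₁
  have hγ₃ : ∀ k : ℕ, 3 - γ + k ≠ 0 := by
    simpa [show (2 : ℝ) - γ + 1 = 3 - γ by ring] using add_one_add_natCast_ne_zero hγ₂
  have hA := kummerSeries_mem_absConvAt (a := α) hγ₀ t
  have hB := kummerSeries_mem_absConvAt (a := 2 - α) hγ₃ (-1 * t)
  have hE := kummerSeries_mem_absConvAt (a := 1 - α) hγ₂ (-1 * t)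
  have hD := kummerSeries_mem_absConvAt (a := α - 1) hγ₁ t
  have identity : ((α - 1) / ((γ - 1) * (γ - 2))) •
      ((⟨X, X_mem_absConvAt t⟩ : absConvAt t) * ⟨_, hA⟩ * ⟨_, rescale_mem_absConvAt hB⟩) +
      ⟨_, rescale_mem_absConvAt hE⟩ * ⟨_, hD⟩ = 1 :=
    Subtype.ext (kummerSeries_wronskian hγ₁ hγ₂)
  have key := congrArg (evalAt t) identity
  simp only [map_add, map_smul, map_mul, map_one, evalAt_X, evalAt_kummerSeries,
    evalAt_rescale_kummerSeries, smul_eq_mul, neg_one_mul] at key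
  linear_combination key
end
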